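/- arXiv:2602.05620 — 8 statements merged into one kernel-verified Lean document; each statement's English description precedes it below -/
import Mathlib

section
/- Let (fₙ) be a sequence of functions ℝ → ℝ, each of which is a pointwise limit of continuous functions, and suppose fₙ converges uniformly to f. Then f is a pointwise limit of continuous functions. -/
/-!
Pass to a subsequence `fs (φ k)` that is within `2⁻ᵏ` of `f` uniformly, so that `f` is
`fs (φ 0)` plus the series of the differences `fs (φ (k+1)) - fs (φ k)`, each bounded by
`2 · 2⁻ᵏ`. Approximate the `k`-th difference by continuous functions clipped to the same bound
and take the `m`-th approximant of each of the first `m` differences: Tannery's theorem makes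
these finite sums converge pointwise to the series.
-/

open Filter Topology

def BaireOne (f : ℝ → ℝ) : Prop :=
  ∃ g : ℕ → ℝ → ℝ, (∀ n, Continuous (g n)) ∧
    ∀ x, Tendsto (fun n => g n x) atTop (𝓝 (f x))

namespace BaireOne

theorem add {f g : ℝ → ℝ} (hf : BaireOne f) (hg : BaireOne g) : BaireOne (f + g) := by
  obtain ⟨u, hu, hul⟩ := hf
  obtain ⟨v, hv, hvl⟩ := hg
  exact ⟨fun n => u n + v n, fun n => (hu n).add (hv n), fun x => (hul x).add (hvl x)⟩

theorem sub {f g : ℝ → ℝ} (hf : BaireOne f) (hg : BaireOne g) : BaireOne (f - g) := by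
  obtain ⟨u, hu, hul⟩ := hf
  obtain ⟨v, hv, hvl⟩ := hg
  exact ⟨fun n => u n - v n, fun n => (hu n).sub (hv n), fun x => (hul x).sub (hvl x)⟩

theorem exists_approx_abs_le {f : ℝ → ℝ} {M : ℝ} (hf : BaireOne f)
    (hfM : ∀ x, |f x| ≤ M) :
    ∃ g : ℕ → ℝ → ℝ, (∀ n, Continuous (g n)) ∧ (∀ n x, |g n x| ≤ M) ∧
      ∀ x, Tendsto (fun n => g n x) atTop (𝓝 (f x)) := by
  obtain ⟨g, hg, hgl⟩ := hf
  set clip : ℝ → ℝ := fun y => max (-M) (min M y)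
  have hclip : Continuous clip := by fun_prop
  have hclip_of_abs_le {y : ℝ} (hy : |y| ≤ M) : clip y = y := by
    rw [abs_le] at hy
    simp only [clip, min_eq_right hy.2, max_eq_right hy.1]
  refine ⟨fun n x => clip (g n x), fun n => hclip.comp (hg n), fun n x => ?_, fun x => ?_⟩
  · have hM : 0 ≤ M := (abs_nonneg _).trans (hfM x)
    exact abs_le.2 ⟨le_max_left _ _, max_le (by linarith) (min_le_left _ _)⟩
  · rw [← hclip_of_abs_le (hfM x)]
    exact (hclip.tendsto (f x)).comp (hgl x)

theorem tsum {u : ℕ → ℝ → ℝ} {M : ℕ → ℝ} (hu : ∀ k, BaireOne (u k)) (hM : Summable M)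
    (hle : ∀ k x, |u k x| ≤ M k) : BaireOne fun x => ∑' k, u k x := by
  choose v hvc hvle hvl using fun k => (hu k).exists_approx_abs_le (hle k)
  refine ⟨fun m x => ∑ k ∈ Finset.range m, v k m x,
    fun m => continuous_finsetSum _ fun k _ => hvc k m, fun x => ?_⟩
  simp only [sum_eq_tsum_indicator (fun k => v k _ x)]
  refine tendsto_tsum_of_dominated_convergence hM (fun k => ?_) (.of_forall fun m k => ?_)
  · refine (hvl k x).congr' ((eventually_gt_atTop k).mono fun m hkm => ?_)
    simp [hkm]
  · exact (norm_indicator_le_norm_self _ _).trans (hvle k m x)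

theorem of_tendsto_of_abs_sub_succ_le {g : ℕ → ℝ → ℝ} {f : ℝ → ℝ} {M : ℕ → ℝ}
    (hg : ∀ k, BaireOne (g k)) (hM : Summable M) (hle : ∀ k x, |g (k + 1) x - g k x| ≤ M k)
    (hlim : ∀ x, Tendsto (fun k => g k x) atTop (𝓝 (f x))) : BaireOne f := by
  have htel (x : ℝ) : ∑' k, (g (k + 1) x - g k x) = f x - g 0 x := by
    have hsum : Summable fun k => g (k + 1) x - g k x := hM.of_norm_bounded (hle · x)
    refine tendsto_nhds_unique hsum.hasSum.tendsto_sum_nat ?_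
    simpa only [Finset.sum_range_sub (g · x)] using (hlim x).sub_const (g 0 x)
  convert (hg 0).add (tsum (fun k => (hg (k + 1)).sub (hg k)) hM hle) using 1
  ext x
  simp only [Pi.add_apply, Pi.sub_apply, htel]
  ring

end BaireOne

theorem stmt_2 (f : ℝ → ℝ) (fs : ℕ → ℝ → ℝ)
    (hB1 : ∀ n, BaireOne (fs n))
    (hunif : TendstoUniformly fs f atTop) :
    BaireOne f := by
  obtain ⟨φ, hφ, hφf⟩ := extraction_forall_of_eventually fun k =>
    Metric.tendstoUniformly_iff.1 hunif ((1 / 2) ^ k) (by positivity)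
  refine BaireOne.of_tendsto_of_abs_sub_succ_le (fun k => hB1 (φ k))
    (summable_geometric_two.mul_left 2) (fun k x => ?_)
    (fun x => (hunif.tendsto_at x).comp hφ.tendsto_atTop)
  have hpow : (1 / 2 : ℝ) ^ (k + 1) ≤ (1 / 2) ^ k :=
    pow_le_pow_of_le_one (by norm_num) (by norm_num) k.le_succ
  calc |fs (φ (k + 1)) x - fs (φ k) x| = dist (fs (φ (k + 1)) x) (fs (φ k) x) :=
        (Real.dist_eq _ _).symm
    _ ≤ dist (f x) (fs (φ (k + 1)) x) + dist (f x) (fs (φ k) x) := dist_triangle_left _ _ _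
    _ ≤ (1 / 2) ^ k + (1 / 2) ^ k := add_le_add ((hφf (k + 1) x).le.trans hpow) (hφf k x).le
    _ = 2 * (1 / 2) ^ k := (two_mul _).symm
end

section
/- Let f : ℝ → ℝ be a pointwise limit of continuous functions and let C ⊆ ℝ be a nonempty closed set. Then the restriction of f to C has a point of continuity, i.e., there exists x ∈ C such that f restricted to C is continuous at x. -/
open Filter Topology

lemma aux_baire_one {X : Type*} [MetricSpace X] [CompleteSpace X] [Nonempty X]
    (g : X → ℝ) (gs : ℕ → X → ℝ) (hc : ∀ n, Continuous (gs n))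
    (hl : ∀ x, Tendsto (fun n => gs n x) atTop (𝓝 (g x))) :
    ∃ x, ContinuousAt g x := by
  set O : ℝ → Set X := fun ε =>
    {x | ∃ U, IsOpen U ∧ x ∈ U ∧ ∀ y ∈ U, ∀ z ∈ U, dist (g y) (g z) ≤ ε} with hO
  have hO_open : ∀ ε, IsOpen (O ε) := by
    intro ε
    rw [isOpen_iff_forall_mem_open]
    rintro x ⟨U, hU, hxU, hUd⟩
    exact ⟨U, fun y hy => ⟨U, hU, hy, hUd⟩, hU, hxU⟩
  have hO_dense : ∀ ε : ℝ, 0 < ε → Dense (O ε) := by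
    intro ε hε
    set A : ℕ → Set X := fun N =>
      {y | ∀ m, N ≤ m → ∀ n, N ≤ n → dist (gs m y) (gs n y) ≤ ε / 4} with hA
    have hA_closed : ∀ N, IsClosed (A N) := by
      intro N
      have : A N = ⋂ m, ⋂ (_ : N ≤ m), ⋂ n, ⋂ (_ : N ≤ n),
          {y | dist (gs m y) (gs n y) ≤ ε / 4} := by
        ext y; simp [hA]
      rw [this]
      exact isClosed_iInter fun m => isClosed_iInter fun _ =>
        isClosed_iInter fun n => isClosed_iInter fun _ =>
          isClosed_le ((hc m).dist (hc n)) continuous_const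
    have hA_cover : (⋃ N, A N) = Set.univ := by
      rw [Set.eq_univ_iff_forall]
      intro y
      have hcs : CauchySeq (fun n => gs n y) := (hl y).cauchySeq
      obtain ⟨N, hN⟩ := Metric.cauchySeq_iff'.mp hcs (ε / 8) (by linarith)
      refine Set.mem_iUnion.mpr ⟨N, fun m hm n hn => ?_⟩
      have h1 := hN m hm
      have h2 := hN n hn
      calc dist (gs m y) (gs n y)
          ≤ dist (gs m y) (gs N y) + dist (gs n y) (gs N y) := dist_triangle_right _ _ _
        _ ≤ ε / 4 := by linarith
    have hdense := dense_iUnion_interior_of_closed hA_closed hA_cover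
    refine hdense.mono ?_
    rintro w hw
    obtain ⟨N, hwN⟩ := Set.mem_iUnion.mp hw
    -- bound of g on A N
    have hg_bound : ∀ y ∈ A N, dist (g y) (gs N y) ≤ ε / 4 := by
      intro y hy
      have htend : Tendsto (fun m => dist (gs m y) (gs N y)) atTop (𝓝 (dist (g y) (gs N y))) :=
        ((hl y).dist tendsto_const_nhds)
      refine le_of_tendsto htend ?_
      filter_upwards [eventually_ge_atTop N] with m hm
      exact hy m hm N le_rfl
    set U : Set X := interior (A N) ∩ {y | dist (gs N y) (gs N w) < ε / 4} with hU
    have hU_open : IsOpen U :=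
      isOpen_interior.inter (isOpen_lt ((hc N).dist continuous_const) continuous_const)
    have hwU : w ∈ U := ⟨hwN, by simp [dist_self, hε]⟩
    refine ⟨U, hU_open, hwU, ?_⟩
    intro y hy z hz
    have hyA : y ∈ A N := interior_subset hy.1
    have hzA : z ∈ A N := interior_subset hz.1
    have h1 := hg_bound y hyA
    have h2 : dist (gs N y) (gs N w) ≤ ε / 4 := hy.2.le
    have h3 : dist (gs N w) (gs N z) ≤ ε / 4 := by
      rw [dist_comm]; exact hz.2.le
    have h4 : dist (gs N z) (g z) ≤ ε / 4 := by
      rw [dist_comm]; exact hg_bound z hzA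
    have hmid : dist (gs N y) (gs N z) ≤ dist (gs N y) (gs N w) + dist (gs N w) (gs N z) :=
      dist_triangle _ _ _
    calc dist (g y) (g z)
        ≤ dist (g y) (gs N y) + dist (gs N y) (gs N z) + dist (gs N z) (g z) :=
          dist_triangle4 _ _ _ _
      _ ≤ ε := by linarith
  have hRdense : Dense (⋂ n : ℕ, O (1 / (n + 1))) :=
    dense_iInter_of_isOpen (fun n => hO_open _) (fun n => hO_dense _ (by positivity))
  obtain ⟨x, hx⟩ := hRdense.nonempty
  refine ⟨x, ?_⟩
  rw [Metric.continuousAt_iff']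
  intro ε hε
  obtain ⟨n, hn⟩ := exists_nat_one_div_lt hε
  have hxO : x ∈ O (1 / (n + 1)) := Set.mem_iInter.mp hx n
  obtain ⟨U, hUo, hxU, hUd⟩ := hxO
  filter_upwards [hUo.mem_nhds hxU] with y hy
  calc dist (g y) (g x) ≤ 1 / (n + 1) := hUd y hy x hxU
    _ < ε := by exact_mod_cast hn

theorem stmt_4 (f : ℝ → ℝ) (fs : ℕ → ℝ → ℝ)
    (hcont : ∀ n, Continuous (fs n))
    (hlim : ∀ x, Tendsto (fun n => fs n x) atTop (𝓝 (f x)))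
    (C : Set ℝ) (hC : IsClosed C) (hCne : C.Nonempty) :
    ∃ x ∈ C, ContinuousWithinAt f C x := by
  haveI : Nonempty C := hCne.to_subtype
  haveI : CompleteSpace C := hC.completeSpace_coe
  obtain ⟨x, hx⟩ := aux_baire_one (C.restrict f) (fun n => C.restrict (fs n))
    (fun n => (hcont n).comp continuous_subtype_val)
    (fun x => hlim x)
  exact ⟨x, x.2, (continuousWithinAt_iff_continuousAt_restrict f x.2).mpr hx⟩
end

section
/- Let f : ℝ → ℝ be a pointwise limit of continuous functions. For each n define Dₙ = {x ∈ ℝ : osc_f(x) ≥ 2⁻ⁿ}, where osc_f(x) is the oscillation of f at x. Then each Dₙ is closed and nowhere dense. -/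
open Filter Topology Set

/-- The oscillation of `f` at `x`: the infimum over open neighborhoods `U` of `x`
of the diameter `sup f(U) - inf f(U)`, valued in `[0, ∞]`. -/
noncomputable def osc (f : ℝ → ℝ) (x : ℝ) : ENNReal :=
  ⨅ U ∈ 𝓝 x, EMetric.diam (f '' U)

/-! The oscillation is upper semicontinuous, so `{x | ε ≤ osc f x}` is closed. For density of its
complement, fix `δ > 0`: the closed sets `E N` of points where `fs p x` stays `δ / 3`-close to
`fs N x` for all `p ≥ N` cover `ℝ`, so by Baire the union of their interiors is dense. On the
interior of `E N` the function `f` is uniformly `δ / 3`-close to the continuous `fs N`, hence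
varies by at most `δ` near each such point. -/

open Metric

theorem dense_setOf_eventually_dist_le_of_tendsto {X α : Type*} [TopologicalSpace X]
    [BaireSpace X] [PseudoMetricSpace α] {f : X → α} {fs : ℕ → X → α}
    (hcont : ∀ n, Continuous (fs n)) (hlim : ∀ x, Tendsto (fun n => fs n x) atTop (𝓝 (f x)))
    {δ : ℝ} (hδ : 0 < δ) :
    Dense {x | ∀ᶠ y in 𝓝 x, dist (f y) (f x) ≤ δ} := by
  set E : ℕ → Set X := fun N => ⋂ p ≥ N, {x | dist (fs p x) (fs N x) ≤ δ / 3}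
  have hE_closed : ∀ N, IsClosed (E N) := fun N =>
    isClosed_biInter fun p _ => isClosed_le ((hcont p).dist (hcont N)) continuous_const
  have hE_cover : ⋃ N, E N = univ := by
    refine eq_univ_of_forall fun x => ?_
    obtain ⟨N, hN⟩ := Metric.cauchySeq_iff'.1 (hlim x).cauchySeq (δ / 3) (by positivity)
    exact mem_iUnion.2 ⟨N, mem_iInter₂.2 fun p hp => (hN p hp).le⟩
  have hf_near : ∀ N, ∀ x ∈ E N, dist (f x) (fs N x) ≤ δ / 3 := fun N x hx =>
    le_of_tendsto ((hlim x).dist tendsto_const_nhds)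
      (eventually_atTop.2 ⟨N, fun p hp => mem_iInter₂.1 hx p hp⟩)
  refine (dense_iUnion_interior_of_closed hE_closed hE_cover).mono fun y hy => ?_
  obtain ⟨N, hyN⟩ := mem_iUnion.1 hy
  have hfs_near : ∀ᶠ z in 𝓝 y, dist (fs N z) (fs N y) ≤ δ / 3 :=
    (Metric.tendsto_nhds.1 ((hcont N).tendsto y) (δ / 3) (by positivity)).mono fun _ h => h.le
  filter_upwards [mem_interior_iff_mem_nhds.1 hyN, hfs_near] with z hzN hz
  calc dist (f z) (f y) ≤ dist (f z) (fs N z) + dist (fs N z) (fs N y) + dist (fs N y) (f y) :=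
        dist_triangle4 _ _ _ _
    _ ≤ δ / 3 + δ / 3 + δ / 3 := by
        gcongr
        · exact hf_near N z hzN
        · rw [dist_comm]
          exact hf_near N y (interior_subset hyN)
    _ = δ := by ring

theorem osc_le_ediam (f : ℝ → ℝ) {x : ℝ} {U : Set ℝ} (hU : U ∈ 𝓝 x) :
    osc f x ≤ ediam (f '' U) :=
  iInf₂_le U hU

theorem osc_le_of_eventually_dist_le {f : ℝ → ℝ} {x : ℝ} {δ : ℝ}
    (h : ∀ᶠ y in 𝓝 x, dist (f y) (f x) ≤ δ) : osc f x ≤ ENNReal.ofReal (2 * δ) := by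
  refine (osc_le_ediam f h).trans (ediam_le ?_)
  rintro _ ⟨y, hy, rfl⟩ _ ⟨z, hz, rfl⟩
  rw [edist_dist]
  refine ENNReal.ofReal_le_ofReal ?_
  calc dist (f y) (f z) ≤ dist (f y) (f x) + dist (f z) (f x) := dist_triangle_right _ _ _
    _ ≤ 2 * δ := by linarith [hy.out, hz.out]

theorem isOpen_setOf_osc_lt (f : ℝ → ℝ) (ε : ENNReal) : IsOpen {x | osc f x < ε} := by
  refine isOpen_iff_mem_nhds.2 fun x hx => ?_
  obtain ⟨U, hU, hUε⟩ : ∃ U ∈ 𝓝 x, ediam (f '' U) < ε := by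
    simp only [mem_ofPred_eq, osc, iInf_lt_iff, exists_prop] at hx
    exact hx
  filter_upwards [eventually_mem_nhds_iff.2 hU] with y hy
  exact (osc_le_ediam f hy).trans_lt hUε

theorem dense_setOf_osc_lt {f : ℝ → ℝ} {fs : ℕ → ℝ → ℝ} (hcont : ∀ n, Continuous (fs n))
    (hlim : ∀ x, Tendsto (fun n => fs n x) atTop (𝓝 (f x))) {ε : ENNReal} (hε : 0 < ε) :
    Dense {x | osc f x < ε} := by
  obtain ⟨r, -, hr_pos, hrε⟩ := ENNReal.lt_iff_exists_real_btwn.1 hε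
  have hr : 0 < r := ENNReal.ofReal_pos.1 hr_pos
  refine (dense_setOf_eventually_dist_le_of_tendsto hcont hlim (half_pos hr)).mono fun x hx => ?_
  calc osc f x ≤ ENNReal.ofReal (2 * (r / 2)) := osc_le_of_eventually_dist_le hx
    _ = ENNReal.ofReal r := by rw [mul_div_cancel₀ r two_ne_zero]
    _ < ε := hrε

theorem stmt_5 (f : ℝ → ℝ) (fs : ℕ → ℝ → ℝ)
    (hcont : ∀ n, Continuous (fs n))
    (hlim : ∀ x, Tendsto (fun n => fs n x) atTop (𝓝 (f x)))
    (n : ℕ) :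
    IsClosed {x : ℝ | (2 : ENNReal)⁻¹ ^ n ≤ osc f x} ∧
      IsNowhereDense {x : ℝ | (2 : ENNReal)⁻¹ ^ n ≤ osc f x} := by
  have hpos : (0 : ENNReal) < 2⁻¹ ^ n := ENNReal.pow_pos (ENNReal.inv_pos.2 ENNReal.ofNat_ne_top) n
  rw [isClosed_isNowhereDense_iff_compl]
  simp only [compl_ofPred, not_le]
  exact ⟨isOpen_setOf_osc_lt f _, dense_setOf_osc_lt hcont hlim hpos⟩
end

section
/- The set of discontinuity points of a pointwise limit of continuous functions f : ℝ → ℝ is a meagre F_σ set; in particular, the set of continuity points of f is dense in ℝ. -/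
open Filter Topology Set

/-- oscillation-type set -/
def Dset (f : ℝ → ℝ) (ε : ℝ) : Set ℝ :=
  {x | ∀ δ > 0, ∃ y z, dist y x < δ ∧ dist z x < δ ∧ ε ≤ dist (f y) (f z)}

lemma Dset_closed (f : ℝ → ℝ) (ε : ℝ) : IsClosed (Dset f ε) := by
  rw [← isOpen_compl_iff]
  rw [Metric.isOpen_iff]
  intro x hx
  simp only [Dset, mem_compl_iff, mem_setOf_eq, not_forall, not_exists] at hx
  obtain ⟨δ, hδ, hδ2⟩ := hx
  push_neg at hδ2
  refine ⟨δ/2, by linarith, fun x' hx' => ?_⟩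
  simp only [Dset, mem_compl_iff, mem_setOf_eq, not_forall, not_exists]
  refine ⟨δ/2, by linarith, ?_⟩
  push_neg
  intro y z hy hz
  have hx' : dist x' x < δ/2 := hx'
  exact hδ2 y z (by have := dist_triangle y x' x; linarith)
    (by have := dist_triangle z x' x; linarith)

lemma Dset_interior_empty (f : ℝ → ℝ) (fs : ℕ → ℝ → ℝ)
    (hcont : ∀ n, Continuous (fs n))
    (hlim : ∀ x, Tendsto (fun n => fs n x) atTop (𝓝 (f x)))
    (ε : ℝ) (hε : 0 < ε) : interior (Dset f ε) = ∅ := by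
  by_contra h
  obtain ⟨x, hx⟩ := Set.nonempty_iff_ne_empty.2 h
  set U := interior (Dset f ε) with hU
  have hUopen : IsOpen U := isOpen_interior
  -- the closed "uniformly Cauchy" sets
  set E : ℕ → Set ℝ := fun n =>
    ⋂ (p) (q), {x | n ≤ p → n ≤ q → dist (fs p x) (fs q x) ≤ ε/8} with hE
  have hEclosed : ∀ n, IsClosed (E n) := by
    intro n
    refine isClosed_iInter fun p => isClosed_iInter fun q => ?_
    by_cases hp : n ≤ p
    · by_cases hq : n ≤ q
      · have : {x | n ≤ p → n ≤ q → dist (fs p x) (fs q x) ≤ ε/8}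
            = {x | dist (fs p x) (fs q x) ≤ ε/8} := by
          ext y; simp [hp, hq]
        rw [this]
        exact isClosed_le (Continuous.dist (hcont p) (hcont q)) continuous_const
      · have : {x | n ≤ p → n ≤ q → dist (fs p x) (fs q x) ≤ ε/8} = univ := by
          ext y; simp [hq]
        rw [this]; exact isClosed_univ
    · have : {x | n ≤ p → n ≤ q → dist (fs p x) (fs q x) ≤ ε/8} = univ := by
        ext y; simp [hp]
      rw [this]; exact isClosed_univ
  have hEunion : (⋃ n, E n) = univ := by
    ext y
    simp only [mem_iUnion, mem_univ, iff_true]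
    have hc : CauchySeq (fun n => fs n y) := (hlim y).cauchySeq
    rw [Metric.cauchySeq_iff] at hc
    obtain ⟨N, hN⟩ := hc (ε/8) (by linarith)
    refine ⟨N, ?_⟩
    simp only [hE, mem_iInter, mem_setOf_eq]
    intro p q hp hq
    exact le_of_lt (hN p hp q hq)
  have hdense := dense_iUnion_interior_of_closed hEclosed hEunion
  obtain ⟨x₀, hx₀E, hx₀U⟩ := hdense.exists_mem_open hUopen ⟨x, hx⟩
  obtain ⟨n, hx₀En⟩ := mem_iUnion.1 hx₀E
  -- on E n, f is within ε/8 of fs n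
  have hfsf : ∀ z ∈ E n, dist (fs n z) (f z) ≤ ε/8 := by
    intro z hz
    have h1 : Tendsto (fun p => dist (fs n z) (fs p z)) atTop (𝓝 (dist (fs n z) (f z))) :=
      (tendsto_const_nhds.dist (hlim z))
    refine le_of_tendsto h1 ?_
    filter_upwards [eventually_ge_atTop n] with p hp
    simp only [hE, mem_iInter, mem_setOf_eq] at hz
    exact hz n p le_rfl hp
  -- V open nbhd of x₀
  set V := U ∩ interior (E n) with hV
  have hVopen : IsOpen V := hUopen.inter isOpen_interior
  have hx₀V : x₀ ∈ V := ⟨hx₀U, hx₀En⟩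
  obtain ⟨δ₁, hδ₁, hball₁⟩ := Metric.isOpen_iff.1 hVopen x₀ hx₀V
  have hcontn : ContinuousAt (fs n) x₀ := (hcont n).continuousAt
  rw [Metric.continuousAt_iff] at hcontn
  obtain ⟨δ₂, hδ₂, hball₂⟩ := hcontn (ε/8) (by linarith)
  set δ := min δ₁ δ₂ with hδdef
  have hδ : 0 < δ := lt_min hδ₁ hδ₂
  have key : ∀ y, dist y x₀ < δ → dist (f y) (f x₀) ≤ 3*ε/8 := by
    intro y hy
    have hyV : y ∈ V := hball₁ (lt_of_lt_of_le hy (min_le_left _ _))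
    have hyE : y ∈ E n := interior_subset hyV.2
    have hx₀E' : x₀ ∈ E n := interior_subset hx₀En
    have h1 := hfsf y hyE
    have h2 := hfsf x₀ hx₀E'
    have h3 : dist (fs n y) (fs n x₀) < ε/8 := hball₂ (lt_of_lt_of_le hy (min_le_right _ _))
    calc dist (f y) (f x₀) ≤ dist (f y) (fs n y) + dist (fs n y) (fs n x₀)
            + dist (fs n x₀) (f x₀) := dist_triangle4 _ _ _ _
      _ ≤ ε/8 + ε/8 + ε/8 := by
          have h1' : dist (f y) (fs n y) ≤ ε/8 := by rw [dist_comm]; exact h1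
          exact add_le_add (add_le_add h1' h3.le) h2
      _ = 3*ε/8 := by ring
  -- contradiction with x₀ ∈ Dset
  have hx₀D : x₀ ∈ Dset f ε := interior_subset hx₀U
  obtain ⟨y, z, hy, hz, hyz⟩ := hx₀D δ hδ
  have h1 := key y hy
  have h2 := key z hz
  have : dist (f y) (f z) ≤ 3*ε/8 + 3*ε/8 := by
    calc dist (f y) (f z) ≤ dist (f y) (f x₀) + dist (f x₀) (f z) := dist_triangle _ _ _
      _ ≤ 3*ε/8 + 3*ε/8 := by rw [dist_comm (f x₀) (f z)]; gcongr
  linarith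

lemma Dset_eq (f : ℝ → ℝ) :
    {x : ℝ | ¬ ContinuousAt f x} = ⋃ n : ℕ, Dset f (1/(n+1)) := by
  ext x
  simp only [mem_setOf_eq, mem_iUnion]
  constructor
  · intro hx
    rw [Metric.continuousAt_iff] at hx
    push_neg at hx
    obtain ⟨ε, hε, hx⟩ := hx
    obtain ⟨n, hn⟩ := exists_nat_one_div_lt hε
    refine ⟨n, fun δ hδ => ?_⟩
    obtain ⟨y, hy, hfy⟩ := hx δ hδ
    exact ⟨y, x, hy, by simpa using hδ, le_trans (le_of_lt hn) hfy⟩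
  · rintro ⟨n, hn⟩ hc
    rw [Metric.continuousAt_iff] at hc
    have hpos : (0:ℝ) < 1/(n+1) := by positivity
    obtain ⟨δ, hδ, hball⟩ := hc (1/(n+1)/2) (by linarith)
    obtain ⟨y, z, hy, hz, hyz⟩ := hn δ hδ
    have h1 : dist (f y) (f x) < 1/(n+1)/2 := hball hy
    have h2 : dist (f z) (f x) < 1/(n+1)/2 := hball hz
    have : dist (f y) (f z) < 1/(n+1) := by
      calc dist (f y) (f z) ≤ dist (f y) (f x) + dist (f x) (f z) := dist_triangle _ _ _
        _ < 1/(n+1)/2 + 1/(n+1)/2 := by rw [dist_comm (f x) (f z)]; exact add_lt_add h1 h2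
        _ = 1/(n+1) := by ring
    linarith

theorem stmt_6 (f : ℝ → ℝ) (fs : ℕ → ℝ → ℝ)
    (hcont : ∀ n, Continuous (fs n))
    (hlim : ∀ x, Tendsto (fun n => fs n x) atTop (𝓝 (f x))) :
    IsMeagre {x : ℝ | ¬ ContinuousAt f x} ∧
      (∃ F : ℕ → Set ℝ, (∀ n, IsClosed (F n)) ∧
        {x : ℝ | ¬ ContinuousAt f x} = ⋃ n, F n) ∧
      Dense {x : ℝ | ContinuousAt f x} := by
  have heq := Dset_eq f
  have hnwd : ∀ n : ℕ, IsNowhereDense (Dset f (1/(n+1))) := by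
    intro n
    have hpos : (0:ℝ) < 1/(n+1) := by positivity
    have h := Dset_interior_empty f fs hcont hlim _ hpos
    rw [IsNowhereDense, (Dset_closed f _).closure_eq, h]
  have hmeagre : IsMeagre {x : ℝ | ¬ ContinuousAt f x} := by
    rw [heq]
    refine isMeagre_iUnion fun n => ?_
    have := isClosed_isNowhereDense_iff_compl.1 ⟨Dset_closed f _, hnwd n⟩
    exact residual_of_dense_open this.1 this.2
  refine ⟨hmeagre, ⟨fun n => Dset f (1/(n+1)), fun n => Dset_closed f _, heq⟩, ?_⟩
  have : {x : ℝ | ContinuousAt f x} = {x : ℝ | ¬ ContinuousAt f x}ᶜ := by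
    ext x; simp
  rw [this]
  exact dense_of_mem_residual hmeagre
end

section
/- Let X ⊆ ℝ be a nonempty closed set and let P ⊆ ℝ be a set that is both F_σ and G_δ. Then there exists an open set O ⊆ ℝ such that O ∩ X ≠ ∅ and either O ∩ X ⊆ P or O ∩ X ⊆ ℝ \ P. -/
open Set

theorem stmt_7 (X P : Set ℝ) (hX : IsClosed X) (hXne : X.Nonempty)
    (hFσ : ∃ F : ℕ → Set ℝ, (∀ n, IsClosed (F n)) ∧ P = ⋃ n, F n)
    (hGδ : ∃ G : ℕ → Set ℝ, (∀ n, IsOpen (G n)) ∧ P = ⋂ n, G n) :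
    ∃ O : Set ℝ, IsOpen O ∧ (O ∩ X).Nonempty ∧
      (O ∩ X ⊆ P ∨ O ∩ X ⊆ Pᶜ) := by
  obtain ⟨F, hFcl, hFP⟩ := hFσ
  obtain ⟨G, hGop, hGP⟩ := hGδ
  haveI : CompleteSpace ↥X := hX.completeSpace_coe
  haveI : Nonempty ↥X := hXne.to_subtype
  set f : ℕ ⊕ ℕ → Set ↥X := fun k =>
    Sum.rec (fun n => Subtype.val ⁻¹' F n) (fun n => Subtype.val ⁻¹' (G n)ᶜ) k with hf
  have hfc : ∀ k, IsClosed (f k) := by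
    rintro (n | n)
    · exact (hFcl n).preimage continuous_subtype_val
    · exact ((hGop n).isClosed_compl).preimage continuous_subtype_val
  have hfu : ⋃ k, f k = univ := by
    ext x
    simp only [mem_iUnion, mem_univ, iff_true]
    by_cases hx : (x : ℝ) ∈ P
    · rw [hFP] at hx
      obtain ⟨n, hn⟩ := mem_iUnion.1 hx
      exact ⟨Sum.inl n, hn⟩
    · rw [hGP] at hx
      obtain ⟨n, hn⟩ := by simpa [mem_iInter] using hx
      exact ⟨Sum.inr n, hn⟩
  obtain ⟨k, x, hxk⟩ := nonempty_interior_of_iUnion_of_closed hfc hfu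
  obtain ⟨O, hOop, hOpre⟩ := isOpen_induced_iff.1 (isOpen_interior (s := f k))
  have hxO : (x : ℝ) ∈ O := by rw [← hOpre] at hxk; exact hxk
  have hsub : O ∩ X ⊆ Subtype.val '' (f k) := by
    rintro y ⟨hyO, hyX⟩
    have : (⟨y, hyX⟩ : ↥X) ∈ interior (f k) := by rw [← hOpre]; exact hyO
    exact ⟨⟨y, hyX⟩, interior_subset this, rfl⟩
  refine ⟨O, hOop, ⟨x, hxO, x.2⟩, ?_⟩
  rcases k with n | n
  · left
    intro y hy
    obtain ⟨z, hz, rfl⟩ := hsub hy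
    rw [hFP]; exact mem_iUnion.2 ⟨n, hz⟩
  · right
    intro y hy
    obtain ⟨z, hz, rfl⟩ := hsub hy
    rw [mem_compl_iff, hGP, mem_iInter]
    intro h
    exact hz (h n)
end

section
/- Let (fₙ) be a sequence of continuous functions ℝ → ℝ converging pointwise to f. Then for every ε > 0 there exists a function δ : ℝ → ℝ with δ(x) > 0 for all x, such that for all x, y ∈ ℝ: if |x − y| < min(δ(x), δ(y)) then |f(x) − f(y)| < ε. -/
open Filter Topology

theorem stmt_8 (f : ℝ → ℝ) (fs : ℕ → ℝ → ℝ)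
    (hcont : ∀ n, Continuous (fs n))
    (hlim : ∀ x, Tendsto (fun n => fs n x) atTop (𝓝 (f x))) :
    ∀ ε > (0 : ℝ), ∃ δ : ℝ → ℝ, (∀ x, 0 < δ x) ∧
      ∀ x y : ℝ, |x - y| < min (δ x) (δ y) → |f x - f y| < ε := by
  intro ε hε
  have hε4 : (0:ℝ) < ε/4 := by linarith
  have hNex : ∀ x : ℝ, ∃ N : ℕ, ∀ m ≥ N, ∀ k ≥ N, |fs m x - fs k x| ≤ ε/4 := by
    intro x
    have hc : CauchySeq (fun n => fs n x) := (hlim x).cauchySeq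
    obtain ⟨N, hN⟩ := Metric.cauchySeq_iff.mp hc (ε/4) hε4
    exact ⟨N, fun m hm k hk => by
      have := hN m hm k hk
      rw [Real.dist_eq] at this
      linarith⟩
  choose N hN using hNex
  have hfN : ∀ x : ℝ, ∀ m ≥ N x, |f x - fs m x| ≤ ε/4 := by
    intro x m hm
    have ht : Tendsto (fun k => |fs k x - fs m x|) atTop (𝓝 |f x - fs m x|) :=
      ((hlim x).sub tendsto_const_nhds).abs
    refine le_of_tendsto ht ?_
    filter_upwards [eventually_ge_atTop (N x)] with k hk
    exact hN x k hk m hm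
  have hδex : ∀ x : ℝ, ∃ d > (0:ℝ), ∀ y, |y - x| < d → |fs (N x) y - fs (N x) x| < ε/4 := by
    intro x
    have := Metric.continuous_iff.mp (hcont (N x)) x (ε/4) hε4
    simpa [Real.dist_eq] using this
  choose δ hδpos hδ using hδex
  refine ⟨δ, hδpos, ?_⟩
  intro x y h
  have hx : |x - y| < δ x := lt_of_lt_of_le h (min_le_left _ _)
  have hy : |x - y| < δ y := lt_of_lt_of_le h (min_le_right _ _)
  rcases le_total (N x) (N y) with hle | hle
  · have h1 : |f x - fs (N y) x| ≤ ε/4 := hfN x (N y) hle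
    have h2 : |fs (N y) x - fs (N y) y| < ε/4 := hδ y x hy
    have h3 : |f y - fs (N y) y| ≤ ε/4 := hfN y (N y) le_rfl
    have t1 : |f x - f y| ≤ |f x - fs (N y) x| + |fs (N y) x - f y| := abs_sub_le _ _ _
    have t2 : |fs (N y) x - f y| ≤ |fs (N y) x - fs (N y) y| + |fs (N y) y - f y| :=
      abs_sub_le _ _ _
    rw [abs_sub_comm] at h3
    linarith
  · have h1 : |f y - fs (N x) y| ≤ ε/4 := hfN y (N x) hle
    have h2 : |fs (N x) y - fs (N x) x| < ε/4 := hδ x y (by rwa [abs_sub_comm])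
    have h3 : |f x - fs (N x) x| ≤ ε/4 := hfN x (N x) le_rfl
    have t1 : |f x - f y| ≤ |f x - fs (N x) x| + |fs (N x) x - f y| := abs_sub_le _ _ _
    have t2 : |fs (N x) x - f y| ≤ |fs (N x) x - fs (N x) y| + |fs (N x) y - f y| :=
      abs_sub_le _ _ _
    rw [abs_sub_comm (fs (N x) x) (fs (N x) y)] at t2
    rw [abs_sub_comm] at h1
    linarith
end

section
/- Suppose f : ℝ → ℝ has the property that for every ε > 0 there exists δ : ℝ → ℝ with δ(x) > 0 for all x such that |x − y| < min(δ(x), δ(y)) implies |f(x) − f(y)| < ε. Then for every nonempty closed set C ⊆ ℝ, the restriction of f to C has a point of continuity in C. -/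
/-!
Fix ε and a gauge δ for it. The closed sets `closure {z | 1/(n+1) ≤ δ z}` cover the space, so
by Baire the union of their interiors is dense and open. Two points of such a closure within
`1/(2(n+1))` of each other can be moved, at f-cost less than ε each, to points of
`{z | 1/(n+1) ≤ δ z}` within `1/(n+1)` of each other, so their f-values differ by less than 3ε.
Hence f oscillates by at most 3ε near every point of that dense open set, and f is continuous on
the intersection of these sets over ε = 1/(k+1), a dense Gδ.
-/

section Gauge

variable {X Y : Type*} [PseudoMetricSpace X] [PseudoMetricSpace Y]

structure IsGauge (f : X → Y) (ε : ℝ) (δ : X → ℝ) : Prop where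
  pos : ∀ x, 0 < δ x
  dist_lt : ∀ x y, dist x y < min (δ x) (δ y) → dist (f x) (f y) < ε

variable {f : X → Y} {ε : ℝ} {δ : X → ℝ}

lemma IsGauge.exists_near_of_mem_closure (hδ : IsGauge f ε δ) {r : ℝ} (hr : 0 < r) {x : X}
    (hx : x ∈ closure {z | r ≤ δ z}) :
    ∃ x', r ≤ δ x' ∧ dist x x' < r / 4 ∧ dist (f x) (f x') < ε := by
  obtain ⟨x', hx'δ : r ≤ δ x', hxx'⟩ :=
    Metric.mem_closure_iff.1 hx (min (δ x) (r / 4)) (lt_min (hδ.pos x) (by positivity))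
  refine ⟨x', hx'δ, hxx'.trans_le (min_le_right _ _), hδ.dist_lt x x' ?_⟩
  exact lt_min_iff.2 ⟨hxx'.trans_le (min_le_left _ _),
    hxx'.trans_le ((min_le_right _ _).trans (by linarith))⟩

lemma IsGauge.dist_lt_three_mul_of_mem_closure (hδ : IsGauge f ε δ) {r : ℝ} (hr : 0 < r)
    {x y : X} (hx : x ∈ closure {z | r ≤ δ z}) (hy : y ∈ closure {z | r ≤ δ z})
    (hxy : dist x y < r / 2) : dist (f x) (f y) < 3 * ε := by
  obtain ⟨x', hx'δ, hxx', hfx⟩ := hδ.exists_near_of_mem_closure hr hx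
  obtain ⟨y', hy'δ, hyy', hfy⟩ := hδ.exists_near_of_mem_closure hr hy
  have hx'y' : dist x' y' < r := calc
    dist x' y' ≤ dist x' x + dist x y + dist y y' := dist_triangle4 _ _ _ _
    _ < r / 4 + r / 2 + r / 4 := by rw [dist_comm x']; gcongr
    _ = r := by ring
  have hfx'y' : dist (f x') (f y') < ε :=
    hδ.dist_lt x' y' (lt_min_iff.2 ⟨by linarith, by linarith⟩)
  calc dist (f x) (f y) ≤ dist (f x) (f x') + dist (f x') (f y') + dist (f y') (f y) :=
        dist_triangle4 _ _ _ _
    _ < ε + ε + ε := by rw [dist_comm (f y')]; gcongr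
    _ = 3 * ε := by ring

def gaugeRegularSet (δ : X → ℝ) : Set X :=
  ⋃ n : ℕ, interior (closure {z | 1 / (n + 1 : ℝ) ≤ δ z})

lemma isOpen_gaugeRegularSet : IsOpen (gaugeRegularSet δ) :=
  isOpen_iUnion fun _ => isOpen_interior

lemma dense_gaugeRegularSet [BaireSpace X] (hδ : ∀ x, 0 < δ x) :
    Dense (gaugeRegularSet δ) := by
  refine dense_iUnion_interior_of_closed (fun _ => isClosed_closure) ?_
  refine Set.eq_univ_of_forall fun x => Set.mem_iUnion.2 ?_
  obtain ⟨n, hn⟩ := exists_nat_one_div_lt (hδ x)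
  exact ⟨n, subset_closure hn.le⟩

lemma IsGauge.exists_dist_lt_of_mem_gaugeRegularSet (hδ : IsGauge f ε δ) {x : X}
    (hx : x ∈ gaugeRegularSet δ) :
    ∃ ρ > 0, ∀ y, dist y x < ρ → dist (f y) (f x) < 3 * ε := by
  obtain ⟨n, hn⟩ := Set.mem_iUnion.1 hx
  obtain ⟨ρ, hρ, hball⟩ := Metric.isOpen_iff.1 isOpen_interior x hn
  have hr : (0 : ℝ) < 1 / (n + 1) := by positivity
  refine ⟨min ρ (1 / (n + 1) / 2), by positivity, fun y hy => ?_⟩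
  have hyn := hball (hy.trans_le (min_le_left _ _))
  exact hδ.dist_lt_three_mul_of_mem_closure hr (interior_subset hyn) (interior_subset hn)
    (hy.trans_le (min_le_right _ _))

theorem dense_setOf_continuousAt_of_isGauge [BaireSpace X]
    (hgauge : ∀ ε > 0, ∃ δ : X → ℝ, IsGauge f ε δ) : Dense {x | ContinuousAt f x} := by
  choose δ hδ using fun k : ℕ => hgauge (1 / (k + 1)) (by positivity)
  have hdense : Dense (⋂ k, gaugeRegularSet (δ k)) :=
    dense_iInter_of_isOpen (fun _ => isOpen_gaugeRegularSet)
      (fun k => dense_gaugeRegularSet (hδ k).pos)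
  refine hdense.mono fun x hx => Metric.continuousAt_iff.2 fun ε hε => ?_
  obtain ⟨k, hk⟩ := exists_nat_one_div_lt (by positivity : 0 < ε / 3)
  obtain ⟨ρ, hρ, hosc⟩ :=
    (hδ k).exists_dist_lt_of_mem_gaugeRegularSet (Set.mem_iInter.1 hx k)
  exact ⟨ρ, hρ, fun {y} hy => (hosc y hy).trans (by linarith)⟩

end Gauge

theorem stmt_9 (f : ℝ → ℝ)
    (hgauge : ∀ ε > (0 : ℝ), ∃ δ : ℝ → ℝ, (∀ x, 0 < δ x) ∧
      ∀ x y : ℝ, |x - y| < min (δ x) (δ y) → |f x - f y| < ε)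
    (C : Set ℝ) (hC : IsClosed C) (hCne : C.Nonempty) :
    ∃ x ∈ C, ContinuousWithinAt f C x := by
  have : CompleteSpace C := hC.completeSpace_coe
  have : Nonempty C := hCne.to_subtype
  have hgaugeC : ∀ ε > 0, ∃ δ : C → ℝ, IsGauge (C.domRestrict f) ε δ := by
    intro ε hε
    obtain ⟨δ, hpos, hδ⟩ := hgauge ε hε
    exact ⟨fun x => δ x, ⟨fun x => hpos x, fun x y => hδ x y⟩⟩
  obtain ⟨x, hx⟩ := (dense_setOf_continuousAt_of_isGauge hgaugeC).nonempty
  exact ⟨x, x.2, (continuousWithinAt_iff_continuousAt_domRestrict f x.2).2 hx⟩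
end

section
/- Let X, Y ⊆ ℝ be disjoint sets that are each both F_σ and G_δ. Then there exists a function f : ℝ → ℝ of Baire class 1 such that f(x) = 0 for all x ∈ X and f(x) = 1 for all x ∈ Y. -/
open Filter Topology Set

def IsFsigma (S : Set ℝ) : Prop :=
  ∃ F : ℕ → Set ℝ, (∀ n, IsClosed (F n)) ∧ S = ⋃ n, F n

def IsGdeltaSet (S : Set ℝ) : Prop :=
  ∃ G : ℕ → Set ℝ, (∀ n, IsOpen (G n)) ∧ S = ⋂ n, G n

theorem stmt_15 (X Y : Set ℝ) (hdisj : Disjoint X Y)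
    (hX : IsFsigma X ∧ IsGdeltaSet X) (hY : IsFsigma Y ∧ IsGdeltaSet Y) :
    ∃ f : ℝ → ℝ, BaireOne f ∧ (∀ x ∈ X, f x = 0) ∧ (∀ x ∈ Y, f x = 1) := by
  obtain ⟨⟨F, hFc, hFU⟩, ⟨G, hGo, hGI⟩⟩ := hY
  -- closed increasing approximations of Y and Yᶜ
  set K : ℕ → Set ℝ := fun n => ⋃ i ∈ Finset.range (n + 1), F i with hK
  set L : ℕ → Set ℝ := fun n => ⋃ i ∈ Finset.range (n + 1), (G i)ᶜ with hL
  have hKc : ∀ n, IsClosed (K n) := fun n =>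
    (Finset.range (n + 1)).finite_toSet.isClosed_biUnion fun i _ => hFc i
  have hLc : ∀ n, IsClosed (L n) := fun n =>
    (Finset.range (n + 1)).finite_toSet.isClosed_biUnion fun i _ => (hGo i).isClosed_compl
  have hKY : ∀ n, K n ⊆ Y := by
    intro n x hx
    simp only [hK, mem_iUnion] at hx
    obtain ⟨i, _, hi⟩ := hx
    rw [hFU]; exact mem_iUnion.mpr ⟨i, hi⟩
  have hLY : ∀ n, L n ⊆ Yᶜ := by
    intro n x hx hxY
    simp only [hL, mem_iUnion] at hx
    obtain ⟨i, _, hi⟩ := hx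
    rw [hGI] at hxY
    exact hi (mem_iInter.mp hxY i)
  have hdisjKL : ∀ n, Disjoint (L n) (K n) := fun n =>
    Disjoint.mono (hLY n) (hKY n) disjoint_compl_left
  have hg : ∀ n, ∃ g : C(ℝ, ℝ), EqOn g 0 (L n) ∧ EqOn g 1 (K n) ∧
      ∀ x, g x ∈ Icc (0:ℝ) 1 :=
    fun n => exists_continuous_zero_one_of_isClosed (hLc n) (hKc n) (hdisjKL n)
  choose g hg0 hg1 _ using hg
  refine ⟨Y.indicator 1, ⟨fun n => g n, fun n => (g n).continuous, ?_⟩,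
    fun x hx => by simp [indicator_apply, disjoint_left.mp hdisj hx],
    fun x hx => by simp [indicator_apply, hx]⟩
  intro x
  by_cases hx : x ∈ Y
  · have : ∀ᶠ n in atTop, Y.indicator 1 x = g n x := by
      obtain ⟨m, hm⟩ := mem_iUnion.mp (hFU ▸ hx)
      filter_upwards [eventually_ge_atTop m] with n hn
      have hxK : x ∈ K n :=
        mem_iUnion.mpr ⟨m, mem_iUnion.mpr ⟨Finset.mem_range.mpr (by omega), hm⟩⟩
      simp [hg1 n hxK, indicator_apply, hx]
    exact Tendsto.congr' this tendsto_const_nhds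
  · have : ∀ᶠ n in atTop, Y.indicator 1 x = g n x := by
      rw [hGI] at hx
      obtain ⟨m, hm⟩ := by simpa [mem_iInter] using hx
      filter_upwards [eventually_ge_atTop m] with n hn
      have hxL : x ∈ L n :=
        mem_iUnion.mpr ⟨m, mem_iUnion.mpr ⟨Finset.mem_range.mpr (by omega), hm⟩⟩
      have hxY : x ∉ Y := fun h => hLY n hxL h
      simp [hg0 n hxL, indicator_apply, hxY]
    exact Tendsto.congr' this tendsto_const_nhds
end
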